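/- Let Λ_Y denote the integral lattice ℤ^16 equipped with the symmetric bilinear form whose Gram matrix is block diagonal with: three 2×2 blocks [[0,2],[2,0]], one 8×8 block equal to the negative of the Cartan matrix of E8, and two 1×1 blocks (−2); write γ_1 for the standard basis vector of the first (−2) block. Let L_1 denote the sum of the two standard basis vectors of the first 2×2 block (so (L_1,L_1) = 4), and let e_2, e_w be elements of the E8 block of coordinates with (e_2,e_2) = (e_w,e_w) = −4 and (e_2,e_w) = 1. Set w := L_1 + e_w + γ_1. Then: (i) (w,w) = −2; (ii) the map R_w(x) := x + (x,w)·w is a ℤ-linear automorphism of Λ_Y preserving the bilinear form; (iii) R_w(L_1 + e_2) = L_1 + e_2 + 5w; and (iv) the E8-component of R_w(L_1 + e_2) equals e_2 + 5 e_w and satisfies (e_2 + 5 e_w, e_2 + 5 e_w) ≡ 2 (mod 4). -/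
import Mathlib


open Matrix

/-- A 6×6 matrix made of three 2×2 diagonal blocks `[[0,c],[c,0]]`
(the pairs of indices {0,1}, {2,3}, {4,5}). -/
def Ublock (c : ℤ) : Matrix (Fin 6) (Fin 6) ℤ :=
  fun i j => if i ≠ j ∧ i.val / 2 = j.val / 2 then c else 0

def eqY : (Fin 6 ⊕ Fin 8) ⊕ Fin 2 ≃ Fin 16 :=
  (Equiv.sumCongr finSumFinEquiv (Equiv.refl (Fin 2))).trans finSumFinEquiv

/-- Gram matrix of `Λ_Y = U(2)^3 ⊕ E8(-1) ⊕ ⟨-2⟩^2` on `ℤ^16`: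
coordinates 0–5 carry three blocks `[[0,2],[2,0]]`, coordinates 6–13 carry `-E₈`,
coordinates 14, 15 carry `(-2)` each. -/
def GramY : Matrix (Fin 16) (Fin 16) ℤ :=
  (Matrix.reindex eqY eqY)
    (Matrix.fromBlocks
      (Matrix.fromBlocks (Ublock 2) 0 0 (-CartanMatrix.E₈)) 0 0
      (Matrix.diagonal fun _ => -2))

def pairY (x y : Fin 16 → ℤ) : ℤ := x ⬝ᵥ (GramY *ᵥ y)

/-- The sum of the two standard basis vectors of the first `U(2)` block. -/
def L1 : Fin 16 → ℤ := Pi.single 0 1 + Pi.single 1 1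

/-- The standard basis vector of the first `⟨-2⟩` block. -/
def gamma1 : Fin 16 → ℤ := Pi.single 14 1

/-- Projection onto the `E8` block of coordinates (indices 6–13). -/
def projE8 (x : Fin 16 → ℤ) : Fin 16 → ℤ := fun i =>
  if 6 ≤ i.val ∧ i.val < 14 then x i else 0

lemma pairY_add_left (x y z : Fin 16 → ℤ) : pairY (x + y) z = pairY x z + pairY y z := by
  simp [pairY, add_dotProduct]

lemma pairY_add_right (x y z : Fin 16 → ℤ) : pairY x (y + z) = pairY x y + pairY x z := by
  simp [pairY, Matrix.mulVec_add, dotProduct_add]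

lemma pairY_smul_left (c : ℤ) (x y : Fin 16 → ℤ) : pairY (c • x) y = c * pairY x y := by
  unfold pairY; rw [smul_dotProduct]; rfl

lemma pairY_smul_right (c : ℤ) (x y : Fin 16 → ℤ) : pairY x (c • y) = c * pairY x y := by
  unfold pairY; rw [Matrix.mulVec_smul, dotProduct_smul]; rfl

lemma pairY_comm (x y : Fin 16 → ℤ) : pairY x y = pairY y x := by
  have h : GramYᵀ = GramY := by decide
  unfold pairY
  conv_lhs => rw [Matrix.dotProduct_mulVec, ← h, Matrix.vecMul_transpose,
    dotProduct_comm]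

lemma pairY_L1 (y : Fin 16 → ℤ) : pairY L1 y = 2 * y 1 + 2 * y 0 := by
  have h0 : ∀ j, GramY 0 j = if j = 1 then 2 else 0 := by decide
  have h1 : ∀ j, GramY 1 j = if j = 0 then 2 else 0 := by decide
  unfold pairY L1
  rw [add_dotProduct, single_dotProduct, single_dotProduct, one_mul, one_mul]
  show (GramY *ᵥ y) 0 + (GramY *ᵥ y) 1 = _
  simp only [Matrix.mulVec, dotProduct, h0, h1, ite_mul, zero_mul]
  rw [Finset.sum_ite_eq' Finset.univ (1 : Fin 16) (fun j => 2 * y j),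
    Finset.sum_ite_eq' Finset.univ (0 : Fin 16) (fun j => 2 * y j)]
  simp

lemma pairY_gamma1 (y : Fin 16 → ℤ) : pairY gamma1 y = -2 * y 14 := by
  have h14 : ∀ j, GramY 14 j = if j = 14 then -2 else 0 := by decide
  unfold pairY gamma1
  rw [single_dotProduct, one_mul]
  show (GramY *ᵥ y) 14 = _
  simp only [Matrix.mulVec, dotProduct, h14, ite_mul, zero_mul]
  rw [Finset.sum_ite_eq' Finset.univ (14 : Fin 16) (fun j => -2 * y j)]
  simp

theorem stmt3 (e2 ew : Fin 16 → ℤ)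
    (h2supp : ∀ i : Fin 16, (i.val < 6 ∨ 14 ≤ i.val) → e2 i = 0)
    (hwsupp : ∀ i : Fin 16, (i.val < 6 ∨ 14 ≤ i.val) → ew i = 0)
    (h2sq : pairY e2 e2 = -4) (hwsq : pairY ew ew = -4)
    (h2w : pairY e2 ew = 1) :
    pairY (L1 + ew + gamma1) (L1 + ew + gamma1) = -2 ∧
    IsLinearMap ℤ (fun x => x + pairY x (L1 + ew + gamma1) • (L1 + ew + gamma1)) ∧
    Function.Bijective (fun x => x + pairY x (L1 + ew + gamma1) • (L1 + ew + gamma1)) ∧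
    (∀ x y : Fin 16 → ℤ,
      pairY (x + pairY x (L1 + ew + gamma1) • (L1 + ew + gamma1))
            (y + pairY y (L1 + ew + gamma1) • (L1 + ew + gamma1)) = pairY x y) ∧
    ((L1 + e2) + pairY (L1 + e2) (L1 + ew + gamma1) • (L1 + ew + gamma1)
        = L1 + e2 + (5 : ℤ) • (L1 + ew + gamma1)) ∧
    projE8 ((L1 + e2) + pairY (L1 + e2) (L1 + ew + gamma1) • (L1 + ew + gamma1))
        = e2 + (5 : ℤ) • ew ∧
    pairY (e2 + (5 : ℤ) • ew) (e2 + (5 : ℤ) • ew) % 4 = 2 := by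
  set w : Fin 16 → ℤ := L1 + ew + gamma1 with hwdef
  -- basic values
  have hew0 : ew 0 = 0 := hwsupp 0 (Or.inl (by norm_num))
  have hew1 : ew 1 = 0 := hwsupp 1 (Or.inl (by norm_num))
  have hew14 : ew 14 = 0 := hwsupp 14 (Or.inr (by decide))
  have he20 : e2 0 = 0 := h2supp 0 (Or.inl (by norm_num))
  have he21 : e2 1 = 0 := h2supp 1 (Or.inl (by norm_num))
  have he214 : e2 14 = 0 := h2supp 14 (Or.inr (by decide))
  have hL1L1 : pairY L1 L1 = 4 := by
    rw [pairY_L1]; decide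
  have hL1ew : pairY L1 ew = 0 := by rw [pairY_L1, hew0, hew1]; ring
  have hL1e2 : pairY L1 e2 = 0 := by rw [pairY_L1, he20, he21]; ring
  have hL1g : pairY L1 gamma1 = 0 := by
    rw [pairY_L1]; decide
  have hgg : pairY gamma1 gamma1 = -2 := by
    rw [pairY_gamma1]; decide
  have hgew : pairY gamma1 ew = 0 := by rw [pairY_gamma1, hew14]; ring
  have hge2 : pairY gamma1 e2 = 0 := by rw [pairY_gamma1, he214]; ring
  have hewL1 : pairY ew L1 = 0 := (pairY_comm _ _).trans hL1ew
  have he2L1 : pairY e2 L1 = 0 := (pairY_comm _ _).trans hL1e2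
  have hgL1 : pairY gamma1 L1 = 0 := (pairY_comm _ _).trans hL1g
  have hewg : pairY ew gamma1 = 0 := (pairY_comm _ _).trans hgew
  have he2g : pairY e2 gamma1 = 0 := (pairY_comm _ _).trans hge2
  have hewe2 : pairY ew e2 = 1 := (pairY_comm _ _).trans h2w
  have hww : pairY w w = -2 := by
    rw [hwdef]
    simp only [pairY_add_left, pairY_add_right, hL1L1, hL1ew, hL1g, hwsq, hgg,
      hgew, hewL1, hgL1, hewg]
    ring
  have h5 : pairY (L1 + e2) w = 5 := by
    rw [hwdef]
    simp only [pairY_add_left, pairY_add_right, hL1L1, hL1ew, hL1g, he2L1, h2w, he2g]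
    ring
  refine ⟨hww, ?_, ?_, ?_, ?_, ?_, ?_⟩
  · constructor
    · intro x y
      rw [pairY_add_left, add_smul]
      abel
    · intro c x
      rw [pairY_smul_left, mul_smul]
      module
  · apply Function.Involutive.bijective
    intro x
    show (x + pairY x w • w) + pairY (x + pairY x w • w) w • w = x
    rw [pairY_add_left, pairY_smul_left, hww]
    have : pairY x w + pairY x w * -2 = -pairY x w := by ring
    rw [this, neg_smul]
    abel
  · intro x y
    simp only [pairY_add_left, pairY_add_right, pairY_smul_left, pairY_smul_right, hww,
      pairY_comm w y]
    ring
  · rw [h5]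
  · rw [h5, hwdef]
    funext i
    unfold projE8
    by_cases hi : 6 ≤ i.val ∧ i.val < 14
    · have hi0 : i ≠ 0 := Fin.ne_of_val_ne (by omega)
      have hi1 : i ≠ 1 := Fin.ne_of_val_ne (by omega)
      have hi14 : i ≠ 14 := Fin.ne_of_val_ne (by omega)
      rw [if_pos hi]
      simp only [Pi.add_apply, Pi.smul_apply, smul_eq_mul, L1, gamma1,
        Pi.single_eq_of_ne hi0, Pi.single_eq_of_ne hi1, Pi.single_eq_of_ne hi14]
      ring
    · have hcond : i.val < 6 ∨ 14 ≤ i.val := by omega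
      rw [if_neg hi]
      simp only [Pi.add_apply, Pi.smul_apply, smul_eq_mul,
        h2supp i hcond, hwsupp i hcond]
      ring
  · have : pairY (e2 + (5 : ℤ) • ew) (e2 + (5 : ℤ) • ew) = -94 := by
      simp only [pairY_add_left, pairY_add_right, pairY_smul_left, pairY_smul_right,
        h2sq, hwsq, h2w, hewe2]
      ring
    rw [this]
    decide
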